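/- arXiv:1406.3853 — 2 statements merged into one kernel-verified Lean document; each statement's English description precedes it below -/
import Mathlib

section
/- The matrices R̄ and Q commute and their product rescales Q by q⁻¹: R̄ * Q = Q * R̄ = q⁻¹ • Q, as matrices indexed by Fin n × Fin n over ℤ[q,q⁻¹]. -/
set_option maxHeartbeats 1000000

open LaurentPolynomial Matrix Finset

/-- The Yang-Baxter matrix `R` for a positive crossing. -/
noncomputable def Rmat (n : ℕ) : Matrix (Fin n × Fin n) (Fin n × Fin n) (LaurentPolynomial ℤ) :=
  fun p r =>
    if p.1 = r.1 ∧ p.2 = r.2 ∧ p.1 < p.2 then T 1 - T (-1)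
    else if p.1 = p.2 ∧ p.2 = r.1 ∧ r.1 = r.2 then T 1
    else if p.1 = r.2 ∧ p.2 = r.1 ∧ p.1 ≠ p.2 then 1
    else 0

/-- The Yang-Baxter matrix `R̄` for a negative crossing. -/
noncomputable def Rbar (n : ℕ) : Matrix (Fin n × Fin n) (Fin n × Fin n) (LaurentPolynomial ℤ) :=
  fun p r =>
    if p.1 = r.1 ∧ p.2 = r.2 ∧ p.2 < p.1 then T (-1) - T 1
    else if p.1 = p.2 ∧ p.2 = r.1 ∧ r.1 = r.2 then T (-1)
    else if p.1 = r.2 ∧ p.2 = r.1 ∧ p.1 ≠ p.2 then 1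
    else 0

/-- The matrix `Q` for a singular crossing. -/
noncomputable def Qmat (n : ℕ) : Matrix (Fin n × Fin n) (Fin n × Fin n) (LaurentPolynomial ℤ) :=
  fun p r =>
    if p.1 = p.2 ∧ p.2 = r.1 ∧ r.1 = r.2 then T 1 + T (-1)
    else if p.1 = r.1 ∧ p.2 = r.2 ∧ p.1 < p.2 then T 1
    else if p.1 = r.1 ∧ p.2 = r.2 ∧ p.2 < p.1 then T (-1)
    else if p.1 = r.2 ∧ p.2 = r.1 ∧ p.1 ≠ p.2 then 1
    else 0

/-- The spin of the index `i ∈ Fin n`: the corresponding element of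
`{1-n, 3-n, …, n-3, n-1}`. -/
def spin (n : ℕ) (i : Fin n) : ℤ := 2 * (i : ℤ) - ((n : ℤ) - 1)

/-- The quantum integer `[m] = q^{m-1} + q^{m-3} + ⋯ + q^{1-m}`. -/
noncomputable def qint (m : ℕ) : LaurentPolynomial ℤ :=
  ∑ k ∈ Finset.range m, T (2 * (k : ℤ) - ((m : ℤ) - 1))

lemma Rbar_diag {n : ℕ} (a b : Fin n) :
    Rbar n (a,b) (a,b) = if a = b then T (-1) else if b < a then T (-1) - T 1 else 0 := by
  simp only [Rbar, true_and, and_true]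
  split_ifs <;> first | rfl | omega

lemma Rbar_swap {n : ℕ} {a b : Fin n} (h : a ≠ b) : Rbar n (a,b) (b,a) = 1 := by
  simp only [Rbar, true_and, and_true]
  split_ifs <;> first | rfl | omega

lemma Rbar_ne {n : ℕ} {a b c d : Fin n} (h1 : (a,b) ≠ (c,d)) (h2 : (a,b) ≠ (d,c)) :
    Rbar n (a,b) (c,d) = 0 := by
  simp only [ne_eq, Prod.mk.injEq, not_and] at h1 h2
  simp only [Rbar, true_and, and_true]
  split_ifs with h h' h'' <;>
    first
    | rfl
    | omega
    | (exact absurd h.1 (fun he => absurd h.2.1 (h1 he)))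
    | (exact absurd (h'.1.trans h'.2.1) (fun he => (h1 he) (he ▸ h'.2.2 ▸ rfl)))
    | (exact absurd h''.2.1 (fun he => absurd h''.1 (h2 he)))

lemma Qmat_diag {n : ℕ} (a c d : Fin n) :
    Qmat n (a,a) (c,d) = if a = c ∧ c = d then T 1 + T (-1) else 0 := by
  simp only [Qmat, true_and, and_true]
  split_ifs <;> first | rfl | omega | tauto

lemma Qmat_lt {n : ℕ} {a b : Fin n} (h : a < b) (c d : Fin n) :
    Qmat n (a,b) (c,d) = if a = c ∧ b = d then T 1 else if a = d ∧ b = c then 1 else 0 := by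
  simp only [Qmat, true_and, and_true]
  split_ifs <;> first | rfl | omega | tauto

lemma Qmat_gt {n : ℕ} {a b : Fin n} (h : b < a) (c d : Fin n) :
    Qmat n (a,b) (c,d) = if a = c ∧ b = d then T (-1) else if a = d ∧ b = c then 1 else 0 := by
  simp only [Qmat, true_and, and_true]
  split_ifs <;> first | rfl | omega | tauto

lemma Rbar_mul_Qmat_left (n : ℕ) :
    Rbar n * Qmat n = ((T (-1) : LaurentPolynomial ℤ)) • Qmat n := by
  apply Matrix.ext
  rintro ⟨a,b⟩ ⟨c,d⟩
  rw [Matrix.mul_apply, Matrix.smul_apply, smul_eq_mul]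
  rcases eq_or_ne a b with hab | hab
  · subst hab
    rw [Finset.sum_eq_single (a,a)
      (fun x _ hx => by
        obtain ⟨e,f⟩ := x
        simp only [ne_eq, Prod.mk.injEq, not_and] at hx
        rw [Rbar_ne (by simp only [ne_eq, Prod.mk.injEq, not_and]; tauto)
          (by simp only [ne_eq, Prod.mk.injEq, not_and]; tauto), zero_mul])
      (by simp)]
    rw [Rbar_diag, if_pos rfl]
  · rw [← Finset.sum_subset (Finset.subset_univ {(a,b),(b,a)})
      (fun x _ hx => by
        obtain ⟨e,f⟩ := x
        simp only [Finset.mem_insert, Finset.mem_singleton, Prod.mk.injEq, not_or, not_and] at hx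
        rw [Rbar_ne (by simp only [ne_eq, Prod.mk.injEq, not_and]; tauto)
          (by simp only [ne_eq, Prod.mk.injEq, not_and]; tauto), zero_mul]),
      Finset.sum_pair (by simp [Prod.ext_iff, hab])]
    rw [Rbar_diag, if_neg hab, Rbar_swap hab, one_mul]
    rcases hab.lt_or_gt with h | h
    · rw [Qmat_lt h c d, Qmat_gt h c d]
      split_ifs <;>
        first
          | (exfalso; omega)
          | (simp only [sub_mul, mul_sub, one_mul, mul_one, zero_mul, mul_zero,
              add_zero, zero_add, ← T_add, Int.reduceAdd, Int.reduceNeg, T_zero]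
             try ring_nf
             done)
    · rw [Qmat_gt h c d, Qmat_lt h c d]
      split_ifs <;>
        first
          | (exfalso; omega)
          | (simp only [sub_mul, mul_sub, one_mul, mul_one, zero_mul, mul_zero,
              add_zero, zero_add, ← T_add, Int.reduceAdd, Int.reduceNeg, T_zero]
             try ring_nf
             done)

lemma Rbar_mul_Qmat_right (n : ℕ) :
    Qmat n * Rbar n = ((T (-1) : LaurentPolynomial ℤ)) • Qmat n := by
  apply Matrix.ext
  rintro ⟨a,b⟩ ⟨c,d⟩
  rw [Matrix.mul_apply, Matrix.smul_apply, smul_eq_mul]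
  rcases eq_or_ne c d with hcd | hcd
  · subst hcd
    rw [Finset.sum_eq_single (c,c)
      (fun x _ hx => by
        obtain ⟨e,f⟩ := x
        simp only [ne_eq, Prod.mk.injEq, not_and] at hx
        rw [Rbar_ne (by simp only [ne_eq, Prod.mk.injEq, not_and]; tauto)
          (by simp only [ne_eq, Prod.mk.injEq, not_and]; tauto), mul_zero])
      (by simp)]
    rw [Rbar_diag, if_pos rfl, mul_comm]
  · rw [← Finset.sum_subset (Finset.subset_univ {(c,d),(d,c)})
      (fun x _ hx => by
        obtain ⟨e,f⟩ := x
        simp only [Finset.mem_insert, Finset.mem_singleton, Prod.mk.injEq, not_or, not_and] at hx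
        rw [Rbar_ne (by simp only [ne_eq, Prod.mk.injEq, not_and]; tauto)
          (by simp only [ne_eq, Prod.mk.injEq, not_and]; tauto), mul_zero]),
      Finset.sum_pair (by simp [Prod.ext_iff, hcd])]
    rw [Rbar_diag, if_neg hcd, Rbar_swap hcd.symm, mul_one]
    rcases eq_or_ne a b with hab | hab
    · subst hab
      rw [Qmat_diag a c d, Qmat_diag a d c]
      split_ifs <;>
        first
          | (exfalso; omega)
          | (simp only [zero_mul, mul_zero, add_mul, sub_mul, mul_sub, add_zero, zero_add,
              one_mul, mul_one, ← T_add, Int.reduceAdd, Int.reduceNeg, T_zero]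
             try ring_nf
             done)
    · rcases hab.lt_or_gt with h' | h'
      · rw [Qmat_lt h' c d, Qmat_lt h' d c]
        split_ifs <;>
          first
            | (exfalso; omega)
            | (simp only [zero_mul, mul_zero, add_mul, sub_mul, mul_sub, add_zero, zero_add,
                one_mul, mul_one, ← T_add, Int.reduceAdd, Int.reduceNeg, T_zero]
               try ring_nf
               done)
      · rw [Qmat_gt h' c d, Qmat_gt h' d c]
        split_ifs <;>
          first
            | (exfalso; omega)
            | (simp only [zero_mul, mul_zero, add_mul, sub_mul, mul_sub, add_zero, zero_add,
                one_mul, mul_one, ← T_add, Int.reduceAdd, Int.reduceNeg, T_zero]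
               try ring_nf
               done)

/-- `R̄` and `Q` commute, and `R̄ * Q = Q * R̄ = q⁻¹ • Q`. -/
theorem Rbar_mul_Qmat (n : ℕ) (hn : 2 ≤ n) :
    Rbar n * Qmat n = ((T (-1) : LaurentPolynomial ℤ)) • Qmat n ∧ Qmat n * Rbar n = ((T (-1) : LaurentPolynomial ℤ)) • Qmat n := by
  exact ⟨Rbar_mul_Qmat_left n, Rbar_mul_Qmat_right n⟩
end

section
/- The mixed relation τ₁σ₂⁻¹σ₁⁻¹ = σ₂⁻¹σ₁⁻¹τ₂ of the singular braid monoid holds for the Yang–Baxter matrices: (Q ⊗ I)·(I ⊗ R̄)·(R̄ ⊗ I) = (I ⊗ R̄)·(R̄ ⊗ I)·(I ⊗ Q), where I is the n×n identity matrix, ⊗ is the Kronecker product of matrices (so both sides are matrices indexed by (Fin n × Fin n) × Fin n), and · is matrix multiplication. -/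
open LaurentPolynomial Matrix Finset

/-- `R̄ ⊗ I`, as a matrix indexed by `(Fin n × Fin n) × Fin n`. -/
noncomputable def RbarI (n : ℕ) :
    Matrix ((Fin n × Fin n) × Fin n) ((Fin n × Fin n) × Fin n) (LaurentPolynomial ℤ) :=
  Matrix.kronecker (Rbar n) (1 : Matrix (Fin n) (Fin n) (LaurentPolynomial ℤ))

/-- `I ⊗ R̄`, reindexed so that it is also a matrix indexed by `(Fin n × Fin n) × Fin n`. -/
noncomputable def IRbar (n : ℕ) :
    Matrix ((Fin n × Fin n) × Fin n) ((Fin n × Fin n) × Fin n) (LaurentPolynomial ℤ) :=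
  Matrix.reindex (Equiv.prodAssoc (Fin n) (Fin n) (Fin n)).symm
    (Equiv.prodAssoc (Fin n) (Fin n) (Fin n)).symm
    (Matrix.kronecker (1 : Matrix (Fin n) (Fin n) (LaurentPolynomial ℤ)) (Rbar n))

/-- `Q ⊗ I`, as a matrix indexed by `(Fin n × Fin n) × Fin n`. -/
noncomputable def QI (n : ℕ) :
    Matrix ((Fin n × Fin n) × Fin n) ((Fin n × Fin n) × Fin n) (LaurentPolynomial ℤ) :=
  Matrix.kronecker (Qmat n) (1 : Matrix (Fin n) (Fin n) (LaurentPolynomial ℤ))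

/-- `I ⊗ Q`, reindexed so that it is also a matrix indexed by `(Fin n × Fin n) × Fin n`. -/
noncomputable def IQ (n : ℕ) :
    Matrix ((Fin n × Fin n) × Fin n) ((Fin n × Fin n) × Fin n) (LaurentPolynomial ℤ) :=
  Matrix.reindex (Equiv.prodAssoc (Fin n) (Fin n) (Fin n)).symm
    (Equiv.prodAssoc (Fin n) (Fin n) (Fin n)).symm
    (Matrix.kronecker (1 : Matrix (Fin n) (Fin n) (LaurentPolynomial ℤ)) (Qmat n))

set_option maxRecDepth 10000 in
theorem Q_eq (n : ℕ) : Qmat n = Rbar n + (T 1 : LaurentPolynomial ℤ) • (1 : Matrix (Fin n × Fin n) (Fin n × Fin n) (LaurentPolynomial ℤ)) := by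
  apply Matrix.ext
  rintro ⟨a,b⟩ ⟨c,d⟩
  simp only [Qmat, Rbar, Matrix.add_apply, Matrix.smul_apply, Matrix.one_apply, smul_eq_mul,
    Prod.mk.injEq, mul_ite, mul_one, mul_zero, ne_eq]
  split_ifs
  all_goals first
    | omega
    | ring

noncomputable def cc1 {n : ℕ} (a b : Fin n) : LaurentPolynomial ℤ :=
  if b < a then T (-1) - T 1 else if a = b then T (-1) else 0

noncomputable def cc2 {n : ℕ} (a b : Fin n) : LaurentPolynomial ℤ :=
  if a = b then 0 else 1

theorem cc1_lt {n : ℕ} {a b : Fin n} (h : a < b) : cc1 a b = 0 := by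
  simp only [cc1]; rw [if_neg (by omega), if_neg (by omega)]

theorem cc1_gt {n : ℕ} {a b : Fin n} (h : b < a) : cc1 a b = T (-1) - T 1 := by
  simp only [cc1]; rw [if_pos h]

theorem cc1_eq {n : ℕ} (a : Fin n) : cc1 a a = T (-1) := by
  simp [cc1]

theorem cc2_eq {n : ℕ} (a : Fin n) : cc2 a a = 0 := by
  simp [cc2]

theorem cc2_ne {n : ℕ} {a b : Fin n} (h : a ≠ b) : cc2 a b = 1 := by
  simp only [cc2, if_neg h]

theorem Rbar_apply {n : ℕ} (a b c d : Fin n) :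
    Rbar n (a,b) (c,d) =
      (if c = a then if d = b then cc1 a b else 0 else 0) +
      (if c = b then if d = a then cc2 a b else 0 else 0) := by
  simp only [Rbar, cc1, cc2]
  split_ifs <;> first | omega | ring

theorem one_apply' {n : ℕ} (i j : Fin n) :
    (1 : Matrix (Fin n) (Fin n) (LaurentPolynomial ℤ)) i j = if j = i then 1 else 0 := by
  rw [Matrix.one_apply]
  simp [eq_comm]

theorem sum_ite_irrel' {α β : Type*} [AddCommMonoid β] (s : Finset α) (p : Prop) [Decidable p]
    (f g : α → β) :
    (∑ x ∈ s, if p then f x else g x) = if p then ∑ x ∈ s, f x else ∑ x ∈ s, g x := by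
  split_ifs <;> rfl

set_option maxHeartbeats 8000000 in
theorem ybe (n : ℕ) : RbarI n * IRbar n * RbarI n = IRbar n * RbarI n * IRbar n := by
  apply Matrix.ext
  rintro ⟨⟨a,b⟩,c⟩ ⟨⟨d,e⟩,f⟩
  simp only [RbarI, IRbar, Matrix.mul_apply, Matrix.kroneckerMap_apply, Matrix.reindex_apply,
    Matrix.submatrix_apply, Equiv.prodAssoc_symm_apply,
    one_apply', Fintype.sum_prod_type, Matrix.kronecker, Equiv.symm_symm,
    Equiv.prodAssoc_apply]
  simp only [Rbar_apply, add_mul, mul_add, ite_mul, mul_ite,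
    zero_mul, mul_zero, Finset.sum_add_distrib, Finset.sum_ite_eq, Finset.sum_ite_eq',
    Finset.mem_univ, if_true, Finset.sum_const_zero, zero_add, add_zero, mul_one, one_mul,
    if_false, sum_ite_irrel']
  rcases lt_trichotomy a b with hab|hab|hab <;>
    rcases lt_trichotomy b c with hbc|hbc|hbc <;>
      rcases lt_trichotomy a c with hac|hac|hac <;>
        subst_vars <;>
  first
  | omega
  | (simp (disch := omega) only [cc1_lt, cc1_gt, cc1_eq, cc2_eq, cc2_ne, mul_zero, zero_mul,
      mul_one, one_mul, add_zero, zero_add, ite_self, mul_ite, ite_mul,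
      zero_sub, sub_zero] <;>
     first
     | rfl
     | (split_ifs <;> (try subst_vars) <;>
        (try simp (disch := omega) only [cc1_lt, cc1_gt, cc1_eq, cc2_eq, cc2_ne, mul_zero, zero_mul,
          mul_one, one_mul, add_zero, zero_add, ite_self, mul_ite, ite_mul,
          zero_sub, sub_zero]) <;>
        first | rfl | omega | ring1 |
          (ring_nf; simp only [T_pow, ← T_add]; norm_num; try ring1)))

/-- The mixed relation `(Q ⊗ I)(I ⊗ R̄)(R̄ ⊗ I) = (I ⊗ R̄)(R̄ ⊗ I)(I ⊗ Q)`. -/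
theorem mixed_relation_neg (n : ℕ) (hn : 2 ≤ n) :
    QI n * IRbar n * RbarI n = IRbar n * RbarI n * IQ n := by
  have hQ : QI n = RbarI n + (T 1 : LaurentPolynomial ℤ) • 1 := by
    rw [QI, RbarI, Q_eq]
    ext ⟨⟨a,b⟩,c⟩ ⟨⟨d,e⟩,f⟩
    simp [Matrix.kroneckerMap_apply, Matrix.one_apply, Prod.ext_iff]
    aesop
  have hIQ : IQ n = IRbar n + (T 1 : LaurentPolynomial ℤ) • 1 := by
    rw [IQ, IRbar, Q_eq]
    ext ⟨⟨a,b⟩,c⟩ ⟨⟨d,e⟩,f⟩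
    simp [Matrix.kroneckerMap_apply, Matrix.one_apply, Prod.ext_iff, Equiv.prodAssoc]
    aesop
  rw [hQ, hIQ, add_mul, add_mul, mul_add, smul_mul_assoc, smul_mul_assoc, one_mul,
    mul_smul_comm, mul_one, ybe]
end
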